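/- Let p be an odd prime, g ≥ 1 an integer, and C the (p−1)×(p−1) tridiagonal matrix with 2 on the diagonal and 1 on the sub/super-diagonal. For 1 ≤ n ≤ p−1, (C^g)_{n,1} = (2^{2g+1}/p) · Σ_{j=1}^{(p−1)/2} sin(2πjn/p) · sin(2πj/p) · [ cos(πj/p)^{2g} − (−1)^n sin(πj/p)^{2g} ]. -/

import Mathlib

open Finset Matrix Real

lemma telescope_cos (θ : ℝ) (N : ℕ) :
    (2 * Real.sin (θ/2)) * ∑ k ∈ Finset.range N, Real.cos (k * θ)
      = Real.sin (N * θ - θ/2) + Real.sin (θ/2) := by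
  have h : ∀ k : ℕ, (2 * Real.sin (θ/2)) * Real.cos (k * θ)
      = Real.sin ((k+1) * θ - θ/2) - Real.sin (k * θ - θ/2) := by
    intro k
    have h1 : ((k:ℝ)+1) * θ - θ/2 = k * θ + θ/2 := by ring
    rw [h1, Real.sin_add, Real.sin_sub]
    ring
  rw [Finset.mul_sum]
  calc ∑ k ∈ Finset.range N, (2 * Real.sin (θ/2)) * Real.cos (k * θ)
      = ∑ k ∈ Finset.range N,
          (Real.sin ((k+1) * θ - θ/2) - Real.sin (k * θ - θ/2)) := by
        exact Finset.sum_congr rfl fun k _ => h k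
    _ = Real.sin (N * θ - θ/2) - Real.sin ((0:ℕ) * θ - θ/2) := by
        have := Finset.sum_range_sub (fun k : ℕ => Real.sin (k * θ - θ/2)) N
        push_cast at this ⊢
        exact this
    _ = Real.sin (N * θ - θ/2) + Real.sin (θ/2) := by
        simp [Real.sin_neg]

lemma cos_sum_eval (p a : ℕ) (hp : 0 < p) (ha : 0 < a) (hap : a < 2 * p) :
    ∑ k ∈ Finset.range p, Real.cos (k * a * Real.pi / p)
      = (1 - (-1:ℝ)^a) / 2 := by
  set θ : ℝ := a * Real.pi / p with hθ
  have hp' : (0:ℝ) < p := by exact_mod_cast hp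
  have hθ2 : 0 < θ/2 := by
    apply div_pos (div_pos (mul_pos (by exact_mod_cast ha) Real.pi_pos) hp')
    norm_num
  have hθ2' : θ/2 < Real.pi := by
    rw [hθ, div_lt_iff₀ (by norm_num : (0:ℝ) < 2)] at *
    rw [div_lt_iff₀ hp']
    have : (a:ℝ) < 2 * p := by exact_mod_cast hap
    nlinarith [Real.pi_pos]
  have hs : Real.sin (θ/2) ≠ 0 := ne_of_gt (Real.sin_pos_of_pos_of_lt_pi hθ2 hθ2')
  have key := telescope_cos θ p
  have hNθ : (p:ℝ) * θ = a * Real.pi := by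
    rw [hθ, mul_div_assoc']; exact mul_div_cancel_left₀ _ hp'.ne'
  rw [hNθ, Real.sin_nat_mul_pi_sub] at key
  have hsum : ∑ k ∈ Finset.range p, Real.cos (k * a * Real.pi / p)
      = ∑ k ∈ Finset.range p, Real.cos (k * θ) := by
    apply Finset.sum_congr rfl; intro k _; rw [hθ]; ring_nf
  rw [hsum]
  have h2 : (2 * Real.sin (θ/2)) ≠ 0 := by positivity
  apply mul_left_cancel₀ h2
  rw [key]
  ring

lemma orth_sum (p b : ℕ) (hp : 2 ≤ p) (hb1 : 1 ≤ b) (hb2 : b ≤ p - 1) :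
    ∑ k ∈ Finset.range p, Real.sin (k * b * Real.pi / p) * Real.sin (k * Real.pi / p)
      = if b = 1 then (p:ℝ)/2 else 0 := by
  have hp0 : 0 < p := by omega
  have hterm : ∀ k : ℕ, Real.sin (k * b * Real.pi / p) * Real.sin (k * Real.pi / p)
      = (Real.cos (k * (b-1:ℕ) * Real.pi / p) - Real.cos (k * (b+1:ℕ) * Real.pi / p)) / 2 := by
    intro k
    have hcast : ((b-1:ℕ):ℝ) = (b:ℝ) - 1 := by
      have : (1:ℕ) ≤ b := hb1
      push_cast [this]; ring
    rw [Real.cos_sub_cos, hcast]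
    push_cast
    have e1 : ((k:ℝ) * ((b:ℝ)-1) * Real.pi / p + (k:ℝ) * ((b:ℝ)+1) * Real.pi / p) / 2
        = k * b * Real.pi / p := by field_simp; ring
    have e2 : ((k:ℝ) * ((b:ℝ)-1) * Real.pi / p - (k:ℝ) * ((b:ℝ)+1) * Real.pi / p) / 2
        = -(k * Real.pi / p) := by field_simp; ring
    rw [e1, e2, Real.sin_neg]
    ring
  rw [Finset.sum_congr rfl fun k _ => hterm k, ← Finset.sum_div, Finset.sum_sub_distrib]
  have h2 : ∑ k ∈ Finset.range p, Real.cos (k * ((b+1):ℕ) * Real.pi / p)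
      = (1 - (-1:ℝ)^(b+1)) / 2 := cos_sum_eval p (b+1) hp0 (by omega) (by omega)
  by_cases hb : b = 1
  · subst hb
    have h1 : ∀ k : ℕ, Real.cos (k * ((1-1):ℕ) * Real.pi / p) = 1 := by
      intro k; norm_num
    rw [Finset.sum_congr rfl fun k _ => h1 k, h2]
    simp
  · have h1 : ∑ k ∈ Finset.range p, Real.cos (k * ((b-1):ℕ) * Real.pi / p)
        = (1 - (-1:ℝ)^(b-1)) / 2 := cos_sum_eval p (b-1) hp0 (by omega) (by omega)
    rw [h1, h2, if_neg hb]
    have : (-1:ℝ)^(b+1) = (-1:ℝ)^(b-1) := by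
      have hb' : b + 1 = (b-1) + 2 := by omega
      rw [hb', pow_add]
      norm_num
    rw [this]
    ring

lemma eigen_sum (p : ℕ) (hp : 3 ≤ p)
    (C : Matrix (Fin (p - 1)) (Fin (p - 1)) ℝ)
    (hC : ∀ i j : Fin (p - 1), C i j =
      if (i : ℕ) = (j : ℕ) then 2
      else if (i : ℕ) + 1 = (j : ℕ) ∨ (j : ℕ) + 1 = (i : ℕ) then 1 else 0)
    (k : ℕ) (m : Fin (p - 1)) :
    ∑ i : Fin (p - 1), C m i * Real.sin (((i:ℕ)+1) * k * Real.pi / p)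
      = (2 + 2 * Real.cos (k * Real.pi / p)) * Real.sin (((m:ℕ)+1) * k * Real.pi / p) := by
  have hp0 : (p:ℝ) ≠ 0 := by positivity
  set F : ℕ → ℝ := fun j => Real.sin (j * k * Real.pi / p) with hF
  set M : ℕ := (m : ℕ) with hM
  have hMlt : M < p - 1 := m.2
  have hF0 : F 0 = 0 := by simp [hF]
  have hFp : F p = 0 := by
    have : (p:ℝ) * k * Real.pi / p = k * Real.pi := by field_simp
    simp [hF, this, Real.sin_nat_mul_pi]
  -- rewrite the sum over Fin as sum over range of an explicit function
  have hstep1 : ∑ i : Fin (p - 1), C m i * Real.sin (((i:ℕ)+1) * k * Real.pi / p)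
      = ∑ i ∈ Finset.range (p-1),
          ((if M = i then 2 else if M + 1 = i ∨ i + 1 = M then 1 else 0) * F (i+1)) := by
    rw [← Fin.sum_univ_eq_sum_range]
    apply Finset.sum_congr rfl
    intro i _
    rw [hC m i]
    simp only [hF, hM]
    push_cast
    ring
  rw [hstep1]
  have hsplit : ∀ i : ℕ,
      (if M = i then (2:ℝ) else if M + 1 = i ∨ i + 1 = M then 1 else 0) * F (i+1)
      = (if i = M then 2 * F (M+1) else 0) + (if i + 1 = M then F (i+1) else 0)
        + (if i = M + 1 then F (M+2) else 0) := by
    intro i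
    by_cases h1 : M = i
    · subst h1
      simp [show ¬ (M + 1 = M ∨ M + 1 = M) by omega, show ¬ (M = M + 1) by omega]
    · by_cases h2 : i + 1 = M
      · have : ¬ (M + 1 = i) := by omega
        have h4 : ¬ (i = M) := by omega
        have h5 : ¬ (i = M + 1) := by omega
        simp [h1, h2, this, h4, h5]
      · by_cases h3 : i = M + 1
        · subst h3
          simp [h1, h2, show (M+1) + 1 ≠ M by omega, show M + 1 = M + 1 by rfl]
        · have h5 : ¬ (M + 1 = i) := by omega
          have h6 : ¬ (i = M) := by omega
          simp [h1, h2, h3, h5, h6]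
  rw [Finset.sum_congr rfl fun i _ => hsplit i]
  rw [Finset.sum_add_distrib, Finset.sum_add_distrib]
  have s1 : ∑ i ∈ Finset.range (p-1), (if i = M then 2 * F (M+1) else 0)
      = 2 * F (M+1) := by
    rw [Finset.sum_ite_eq' (Finset.range (p-1)) M (fun _ => 2 * F (M+1))]
    simp [Finset.mem_range, hMlt]
  have s2 : ∑ i ∈ Finset.range (p-1), (if i + 1 = M then F (i+1) else 0) = F M := by
    by_cases hM0 : M = 0
    · have hz : ∀ i ∈ Finset.range (p-1), (if i + 1 = M then F (i+1) else 0) = 0 := by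
        intro i _
        rw [if_neg (by omega)]
      rw [Finset.sum_eq_zero hz, hM0, hF0]
    · have : ∀ i : ℕ, (if i + 1 = M then F (i+1) else 0) = (if i = M - 1 then F (i+1) else 0) := by
        intro i
        congr 1
        simp only [eq_iff_iff]
        omega
      rw [Finset.sum_congr rfl fun i _ => this i]
      rw [Finset.sum_ite_eq' (Finset.range (p-1)) (M-1) (fun i => F (i+1))]
      rw [if_pos (Finset.mem_range.mpr (by omega))]
      congr 1
      omega
  have s3 : ∑ i ∈ Finset.range (p-1), (if i = M + 1 then F (M+2) else 0)
      = F (M+2) := by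
    by_cases hMe : M + 1 < p - 1
    · rw [Finset.sum_ite_eq' (Finset.range (p-1)) (M+1) (fun _ => F (M+2))]
      simp [Finset.mem_range, hMe]
    · have hMp : M + 2 = p := by omega
      rw [Finset.sum_ite_eq' (Finset.range (p-1)) (M+1) (fun _ => F (M+2))]
      rw [if_neg (by simp [Finset.mem_range]; omega), hMp, hFp]
  rw [s1, s2, s3]
  -- trig identity
  have hx : ((M:ℝ)) * k * Real.pi / p
      = ((M:ℝ)+1) * k * Real.pi / p - k * Real.pi / p := by field_simp; ring
  have hy : ((M:ℝ)+2) * k * Real.pi / p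
      = ((M:ℝ)+1) * k * Real.pi / p + k * Real.pi / p := by field_simp; ring
  simp only [hF]
  push_cast
  rw [hx, hy, Real.sin_sub, Real.sin_add]
  ring

lemma pow_formula (p : ℕ) (hp : 3 ≤ p)
    (C : Matrix (Fin (p - 1)) (Fin (p - 1)) ℝ)
    (hC : ∀ i j : Fin (p - 1), C i j =
      if (i : ℕ) = (j : ℕ) then 2
      else if (i : ℕ) + 1 = (j : ℕ) ∨ (j : ℕ) + 1 = (i : ℕ) then 1 else 0)
    (g : ℕ) :
    ∀ m : Fin (p - 1), (C ^ g) m ⟨0, by omega⟩ =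
      (2/(p:ℝ)) * ∑ k ∈ Finset.range p,
        (2 + 2 * Real.cos (k * Real.pi / p)) ^ g *
          (Real.sin (((m:ℕ)+1) * k * Real.pi / p) * Real.sin (k * Real.pi / p)) := by
  induction g with
  | zero =>
    intro m
    have hb1 : 1 ≤ (m:ℕ) + 1 := by omega
    have hb2 : (m:ℕ) + 1 ≤ p - 1 := by have := m.2; omega
    have horth := orth_sum p ((m:ℕ)+1) (by omega) hb1 hb2
    have hcomm : ∀ k : ℕ, Real.sin (((m:ℕ)+1 : ℝ) * k * Real.pi / p)
        = Real.sin ((k:ℝ) * ((m:ℕ)+1) * Real.pi / p) := by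
      intro k; ring_nf
    simp only [pow_zero, one_pow, one_mul]
    rw [Matrix.one_apply]
    have : (∑ k ∈ Finset.range p,
        Real.sin (((m:ℕ)+1 : ℝ) * k * Real.pi / p) * Real.sin (k * Real.pi / p))
        = ∑ k ∈ Finset.range p,
          Real.sin ((k:ℝ) * (((m:ℕ)+1 : ℕ)) * Real.pi / p) * Real.sin (k * Real.pi / p) := by
      apply Finset.sum_congr rfl
      intro k _
      rw [hcomm k]
      push_cast
      ring_nf
    push_cast
    rw [this, horth]
    by_cases hm : m = (⟨0, by omega⟩ : Fin (p-1))
    · have : (m:ℕ) + 1 = 1 := by rw [hm]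
      rw [if_pos hm, if_pos this]
      field_simp
    · have : (m:ℕ) + 1 ≠ 1 := by
        intro h
        apply hm
        apply Fin.ext
        simpa using h
      rw [if_neg hm, if_neg this, mul_zero]
  | succ g ih =>
    intro m
    have hz : (0:ℕ) < p - 1 := by omega
    rw [pow_succ', Matrix.mul_apply]
    have hstep : ∀ i : Fin (p-1), C m i * (C ^ g) i ⟨0, by omega⟩
        = ∑ k ∈ Finset.range p, (2/(p:ℝ)) *
            ((2 + 2 * Real.cos (k * Real.pi / p)) ^ g * Real.sin (k * Real.pi / p))
            * (C m i * Real.sin (((i:ℕ)+1) * k * Real.pi / p)) := by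
      intro i
      rw [ih i, Finset.mul_sum, Finset.mul_sum]
      apply Finset.sum_congr rfl
      intro k _
      ring
    rw [Finset.sum_congr rfl fun i _ => hstep i]
    rw [Finset.sum_comm]
    rw [Finset.mul_sum]
    apply Finset.sum_congr rfl
    intro k _
    rw [← Finset.mul_sum, eigen_sum p hp C hC k m]
    ring

lemma sum_split (q : ℕ) (f : ℕ → ℝ) (hf0 : f 0 = 0) :
    ∑ k ∈ Finset.range (2*q+1), f k
      = ∑ j ∈ Finset.Icc 1 q, (f (2*j) + f (2*q+1 - 2*j)) := by
  classical
  set A : Finset ℕ := (Finset.Icc 1 q).image (fun j => 2*j) with hA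
  set B : Finset ℕ := (Finset.Icc 1 q).image (fun j => 2*q+1 - 2*j) with hB
  have hrange : Finset.range (2*q+1) = insert 0 (A ∪ B) := by
    apply Finset.ext
    intro k
    simp only [Finset.mem_range, Finset.mem_insert, Finset.mem_union, hA, hB,
      Finset.mem_image, Finset.mem_Icc]
    constructor
    · intro hk
      rcases Nat.even_or_odd k with ⟨c, hc⟩ | ⟨c, hc⟩
      · rcases Nat.eq_zero_or_pos c with rfl | hcpos
        · left; omega
        · right; left; exact ⟨c, by omega, by omega⟩
      · right; right; exact ⟨q - c, by omega, by omega⟩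
    · rintro (rfl | ⟨j, ⟨h1, h2⟩, rfl⟩ | ⟨j, ⟨h1, h2⟩, rfl⟩) <;> omega
  have h0AB : (0:ℕ) ∉ A ∪ B := by
    simp only [Finset.mem_union, hA, hB, Finset.mem_image, Finset.mem_Icc]
    rintro (⟨j, ⟨h1, h2⟩, hj⟩ | ⟨j, ⟨h1, h2⟩, hj⟩) <;> omega
  have hdisj : Disjoint A B := by
    rw [Finset.disjoint_left]
    intro k hk hk'
    simp only [hA, hB, Finset.mem_image, Finset.mem_Icc] at hk hk'
    obtain ⟨j, ⟨h1, h2⟩, hj⟩ := hk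
    obtain ⟨j', ⟨h1', h2'⟩, hj'⟩ := hk'
    omega
  rw [hrange, Finset.sum_insert h0AB, hf0, zero_add,
    Finset.sum_union hdisj]
  rw [hA, hB, Finset.sum_image (by intro a ha b hb h; simp only [Finset.coe_Icc, Set.mem_Icc, Finset.mem_Icc] at ha hb h; omega),
    Finset.sum_image (by intro a ha b hb h; simp only [Finset.coe_Icc, Set.mem_Icc, Finset.mem_Icc] at ha hb h; omega),
    ← Finset.sum_add_distrib]

theorem Cpow_entry_trig_formula (p : ℕ) (hp : p.Prime) (hodd : Odd p)
    (C : Matrix (Fin (p - 1)) (Fin (p - 1)) ℝ)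
    (hC : ∀ i j : Fin (p - 1), C i j =
      if (i : ℕ) = (j : ℕ) then 2
      else if (i : ℕ) + 1 = (j : ℕ) ∨ (j : ℕ) + 1 = (i : ℕ) then 1 else 0)
    (g n : ℕ) (hg : 1 ≤ g) (hn1 : 1 ≤ n) (hn2 : n ≤ p - 1) :
    (C ^ g) ⟨n - 1, by have := hp.two_le; omega⟩ ⟨0, by have := hp.two_le; omega⟩ =
      (2 ^ (2 * g + 1) / (p : ℝ)) * ∑ j ∈ Finset.Icc 1 ((p - 1) / 2),
        Real.sin (2 * Real.pi * j * n / p) * Real.sin (2 * Real.pi * j / p) *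
          ((Real.cos (Real.pi * j / p)) ^ (2 * g) -
            (-1 : ℝ) ^ n * (Real.sin (Real.pi * j / p)) ^ (2 * g)) := by
  have hp2 := hp.two_le
  have hp3 : 3 ≤ p := by
    rcases hodd with ⟨t, ht⟩; omega
  set q : ℕ := (p - 1) / 2 with hq
  have hpq : p = 2*q + 1 := by
    rcases hodd with ⟨t, ht⟩; omega
  have hpR : (p:ℝ) = 2*(q:ℝ) + 1 := by exact_mod_cast congrArg (Nat.cast : ℕ → ℝ) hpq
  have hp0 : (p:ℝ) ≠ 0 := by positivity
  have key := pow_formula p hp3 C hC g ⟨n - 1, by omega⟩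
  rw [key]
  have hn' : (((⟨n - 1, by omega⟩ : Fin (p-1)) : ℕ) : ℝ) + 1 = (n:ℝ) := by
    simp only [Fin.val_mk]
    have : ((n-1:ℕ):ℝ) = (n:ℝ) - 1 := by push_cast [hn1]; ring
    rw [this]; ring
  -- rewrite the summand to use f
  set f : ℕ → ℝ := fun k => (2 + 2 * Real.cos (k * Real.pi / p)) ^ g *
      (Real.sin ((n:ℝ) * k * Real.pi / p) * Real.sin (k * Real.pi / p)) with hf
  have hsum1 : ∑ k ∈ Finset.range p,
      (2 + 2 * Real.cos (k * Real.pi / p)) ^ g *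
        (Real.sin ((((⟨n - 1, by omega⟩ : Fin (p-1)) : ℕ) + 1 : ℝ) * k * Real.pi / p)
          * Real.sin (k * Real.pi / p)) = ∑ k ∈ Finset.range p, f k := by
    apply Finset.sum_congr rfl
    intro k _
    rw [hf]
    push_cast
    rw [hn']
  rw [hsum1]
  have hf0 : f 0 = 0 := by simp [hf]
  rw [show Finset.range p = Finset.range (2*q+1) by rw [← hpq], sum_split q f hf0]
  rw [Finset.mul_sum, Finset.mul_sum]
  apply Finset.sum_congr rfl
  intro j hj
  simp only [Finset.mem_Icc] at hj
  obtain ⟨hj1, hj2⟩ := hj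
  -- casts
  have hc1 : ((2*j:ℕ):ℝ) = 2*(j:ℝ) := by push_cast; ring
  have hc2 : ((2*q+1-2*j:ℕ):ℝ) = (p:ℝ) - 2*(j:ℝ) := by
    have h2j : 2*j ≤ 2*q+1 := by omega
    push_cast [h2j]
    rw [hpR]
  set x : ℝ := Real.pi * j / p with hx
  -- angles for the even term
  have a1 : ((2*j:ℕ):ℝ) * Real.pi / p = 2 * x := by rw [hc1, hx]; ring
  have a2 : (n:ℝ) * ((2*j:ℕ):ℝ) * Real.pi / p = 2 * Real.pi * j * n / p := by
    rw [hc1]; ring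
  have a2' : (2:ℝ) * Real.pi * j / p = 2 * x := by rw [hx]; ring
  -- angles for the odd term
  have b1 : ((2*q+1-2*j:ℕ):ℝ) * Real.pi / p = Real.pi - 2 * x := by
    rw [hc2, hx]; field_simp
  have b2 : (n:ℝ) * ((2*q+1-2*j:ℕ):ℝ) * Real.pi / p
      = (n:ℕ) * Real.pi - 2 * Real.pi * j * n / p := by
    rw [hc2]; field_simp
  have fEven : f (2*j) = 4^g * (Real.cos x ^ 2) ^ g *
      (Real.sin (2 * Real.pi * j * n / p) * Real.sin (2 * Real.pi * j / p)) := by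
    rw [hf]
    simp only
    rw [a1, a2, Real.cos_two_mul]
    have : (2:ℝ) * Real.pi * j / p = 2 * x := a2'
    rw [show Real.sin (2*x) = Real.sin (2 * Real.pi * j / p) by rw [this]]
    rw [show (2 + 2*(2*Real.cos x^2 - 1)) = 4 * Real.cos x ^2 by ring, mul_pow]
  have fOdd : f (2*q+1-2*j) = - ((-1:ℝ)^n * (4^g * (Real.sin x ^ 2) ^ g *
      (Real.sin (2 * Real.pi * j * n / p) * Real.sin (2 * Real.pi * j / p)))) := by
    rw [hf]
    simp only
    rw [b1, b2, Real.cos_pi_sub, Real.cos_two_mul, Real.sin_nat_mul_pi_sub,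
      Real.sin_pi_sub]
    rw [show Real.sin (2*x) = Real.sin (2 * Real.pi * j / p) by rw [← a2']]
    have hpyth : Real.sin x ^ 2 + Real.cos x ^ 2 = 1 := Real.sin_sq_add_cos_sq x
    rw [show (2 + 2 * -(2*Real.cos x^2 - 1)) = 4 * Real.sin x ^2 by nlinarith [hpyth],
      mul_pow]
    ring
  rw [fEven, fOdd]
  have hpow2 : (2:ℝ)^(2*g+1) = 2 * 4^g := by
    rw [pow_succ, pow_mul]; norm_num; ring
  rw [hpow2]
  rw [show (Real.cos x ^2)^g = Real.cos x ^ (2*g) by rw [← pow_mul],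
      show (Real.sin x ^2)^g = Real.sin x ^ (2*g) by rw [← pow_mul]]
  field_simp
  ring
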